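/- arXiv:1412.0646 — 6 statements merged into one kernel-verified Lean document; each statement's English description precedes it below -/
import Mathlib

section
/- For any two pairings π₁, π₂ of a finite set I, the number of blocks of the join π₁ ∨ π₂ (in the partition lattice) equals half the number of cycles of the permutation π₁π₂ (where each pairing is viewed as an involution without fixed points). -/
/-!
Write `σ = π₁π₂`. Since `π₁` and `π₂` are involutions, `π₁` conjugates `σ` to `σ⁻¹`, so the group
`⟨π₁, π₂⟩` is dihedral: `⟨σ⟩ ∪ ⟨σ⟩π₁`. Hence each block of `π₁ ∨ π₂` containing `x` is the union
of the `σ`-cycles of `x` and of `π₁ x`. These two cycles are distinct: `π₁ x = σᵏ x` would make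
`σᵐ x` a fixed point of `π₁` (if `k = 2m`) or of `π₂` (if `k = 2m + 1`). So every block is the
union of exactly two cycles.
-/

/-- The number of cycles (orbits, including fixed points) of a permutation. -/
noncomputable def cycleCount {I : Type*} (σ : Equiv.Perm I) : ℕ :=
  Nat.card (MulAction.orbitRel.Quotient (Subgroup.zpowers σ) I)

/-- The number of blocks of the join `Π(π₁) ∨ Π(π₂)` of the orbit partitions,
i.e. the number of orbits of the subgroup generated by `π₁` and `π₂`. -/
noncomputable def jointOrbitCount {I : Type*} (π₁ π₂ : Equiv.Perm I) : ℕ :=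
  Nat.card (MulAction.orbitRel.Quotient
    (Subgroup.closure {π₁, π₂} : Subgroup (Equiv.Perm I)) I)

/-- A pairing of `I`: a fixed-point-free involution. -/
def IsPairing {I : Type*} (π : Equiv.Perm I) : Prop :=
  π * π = 1 ∧ ∀ x, π x ≠ x

theorem Nat.card_eq_mul_of_card_fiber {α β : Type*} [Finite α] [Finite β] (f : α → β) {n : ℕ}
    (hf : ∀ b, Nat.card {a // f a = b} = n) : Nat.card α = n * Nat.card β := by
  have := Fintype.ofFinite β
  rw [← Nat.card_congr (Equiv.sigmaFiberEquiv f), Nat.card_sigma]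
  simp [hf, Nat.card_eq_fintype_card, mul_comm]

open MulAction Subgroup

section Dihedral

variable {G : Type*} [Group G] {τ ρ : G}

theorem mul_mul_zpow_eq_zpow_neg_mul (hτ : τ * τ = 1) (hρ : ρ * ρ = 1) (k : ℤ) :
    τ * (τ * ρ) ^ k = (τ * ρ) ^ (-k) * τ := by
  have hτ' : τ⁻¹ = τ := inv_eq_of_mul_eq_one_right hτ
  have hρ' : ρ⁻¹ = ρ := inv_eq_of_mul_eq_one_right hρ
  have hconj : τ * (τ * ρ) * τ⁻¹ = (τ * ρ)⁻¹ := by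
    rw [mul_inv_rev, hτ', hρ', ← mul_assoc, hτ, one_mul]
  calc τ * (τ * ρ) ^ k = (τ * (τ * ρ) * τ⁻¹) ^ k * τ := by rw [conj_zpow]; group
    _ = (τ * ρ) ^ (-k) * τ := by rw [hconj, inv_zpow']

theorem exists_zpow_of_mem_closure_pair (hτ : τ * τ = 1) (hρ : ρ * ρ = 1) {g : G}
    (hg : g ∈ closure {τ, ρ}) : ∃ k : ℤ, g = (τ * ρ) ^ k ∨ g = (τ * ρ) ^ k * τ := by
  have hswap := mul_mul_zpow_eq_zpow_neg_mul hτ hρ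
  induction hg using closure_induction with
  | mem g hg =>
    rcases hg with rfl | rfl
    · exact ⟨0, .inr (by simp)⟩
    · refine ⟨-1, .inr ?_⟩
      rw [zpow_neg_one, mul_inv_rev, inv_eq_of_mul_eq_one_right hτ, mul_assoc, hτ, mul_one,
        inv_eq_of_mul_eq_one_right hρ]
  | one => exact ⟨0, .inl (by simp)⟩
  | mul g h _ _ ihg ihh =>
    obtain ⟨a, rfl | rfl⟩ := ihg <;> obtain ⟨b, rfl | rfl⟩ := ihh
    · exact ⟨a + b, .inl (zpow_add _ a b).symm⟩
    · exact ⟨a + b, .inr (by rw [zpow_add, mul_assoc])⟩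
    · exact ⟨a + -b, .inr (by rw [mul_assoc, hswap, zpow_add, mul_assoc])⟩
    · refine ⟨a + -b, .inl ?_⟩
      rw [zpow_add, mul_assoc, ← mul_assoc τ, hswap, mul_assoc, hτ, mul_one]
  | inv g _ ih =>
    obtain ⟨a, rfl | rfl⟩ := ih
    · exact ⟨-a, .inl (zpow_neg _ a).symm⟩
    · exact ⟨a, .inr (by rw [mul_inv_rev, inv_eq_of_mul_eq_one_right hτ, ← zpow_neg, hswap,
        neg_neg])⟩

variable {α : Type*} [MulAction G α]

theorem smul_ne_zpow_smul (hτ : τ * τ = 1) (hρ : ρ * ρ = 1) (hτx : ∀ x : α, τ • x ≠ x)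
    (hρx : ∀ x : α, ρ • x ≠ x) (x : α) (k : ℤ) : τ • x ≠ (τ * ρ) ^ k • x := by
  have hswap (j : ℤ) (y : α) : τ • (τ * ρ) ^ j • y = (τ * ρ) ^ (-j) • τ • y := by
    rw [smul_smul, smul_smul, mul_mul_zpow_eq_zpow_neg_mul hτ hρ]
  intro hk
  obtain ⟨m, rfl | rfl⟩ := Int.even_or_odd' k
  · refine hτx ((τ * ρ) ^ m • x) ?_
    rw [hswap, hk, smul_smul, ← zpow_add]
    congr 2
    ring
  · refine hρx ((τ * ρ) ^ m • x) ?_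
    have hρ_smul (y : α) : ρ • y = τ • (τ * ρ) • y := by rw [smul_smul, ← mul_assoc, hτ, one_mul]
    rw [hρ_smul, ← mul_smul (τ * ρ), ← zpow_one_add, hswap, hk, smul_smul, ← zpow_add]
    congr 2
    ring

theorem orbitRel_zpowers_iff {g : G} {x y : α} :
    orbitRel (zpowers g) α x y ↔ ∃ k : ℤ, g ^ k • y = x := by
  rw [orbitRel_apply, mem_orbit_iff, exists_zpowers]
  rfl

theorem orbitRel_closure_pair_iff (hτ : τ * τ = 1) (hρ : ρ * ρ = 1) {x y : α} :
    orbitRel (closure {τ, ρ}) α x y ↔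
      orbitRel (zpowers (τ * ρ)) α x y ∨ orbitRel (zpowers (τ * ρ)) α x (τ • y) := by
  simp only [orbitRel_zpowers_iff, orbitRel_apply, mem_orbit_iff, Subtype.exists,
    smul_smul]
  constructor
  · rintro ⟨g, hg, rfl⟩
    obtain ⟨k, rfl | rfl⟩ := exists_zpow_of_mem_closure_pair hτ hρ hg
    exacts [.inl ⟨k, rfl⟩, .inr ⟨k, rfl⟩]
  · have hτ_mem : τ ∈ closure {τ, ρ} := subset_closure (by simp)
    have hσ_mem : τ * ρ ∈ closure {τ, ρ} :=
      mul_mem hτ_mem (subset_closure (by simp))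
    rintro (⟨k, rfl⟩ | ⟨k, rfl⟩)
    exacts [⟨_, zpow_mem hσ_mem k, rfl⟩, ⟨_, mul_mem (zpow_mem hσ_mem k) hτ_mem, rfl⟩]

theorem card_orbitRel_zpowers_eq_two_mul [Finite α] (hτ : τ * τ = 1) (hρ : ρ * ρ = 1)
    (hτx : ∀ x : α, τ • x ≠ x) (hρx : ∀ x : α, ρ • x ≠ x) :
    Nat.card (orbitRel.Quotient (zpowers (τ * ρ)) α) =
      2 * Nat.card (orbitRel.Quotient (closure {τ, ρ}) α) := by
  let f : orbitRel.Quotient (zpowers (τ * ρ)) α → orbitRel.Quotient (closure {τ, ρ}) α :=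
    Quotient.map' id fun _ _ h ↦ (orbitRel_closure_pair_iff hτ hρ).mpr (.inl h)
  refine Nat.card_eq_mul_of_card_fiber f fun q ↦ ?_
  induction q using Quotient.inductionOn' with
  | h x =>
    have hfiber : {q | f q = Quotient.mk'' x} = {Quotient.mk'' x, Quotient.mk'' (τ • x)} := by
      ext q
      induction q using Quotient.inductionOn' with
      | h y =>
        simp only [f, Set.mem_ofPred_eq, Set.mem_insert_iff, Set.mem_singleton_iff,
          Quotient.map'_mk'', id, Quotient.eq'']
        rw [orbitRel_closure_pair_iff hτ hρ]
    have hne : (Quotient.mk'' x : orbitRel.Quotient (zpowers (τ * ρ)) α) ≠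
        Quotient.mk'' (τ • x) := by
      rw [Ne, Quotient.eq'', orbitRel_zpowers_iff]
      rintro ⟨k, hk⟩
      exact smul_ne_zpow_smul hτ hρ hτx hρx x (-k) (by rw [zpow_neg, eq_inv_smul_iff, hk])
    rw [← Set.coe_ofPred, Nat.card_coe_set_eq, hfiber, Set.ncard_pair hne]

end Dihedral

theorem stmt0 {I : Type*} [Fintype I] (π₁ π₂ : Equiv.Perm I)
    (h₁ : IsPairing π₁) (h₂ : IsPairing π₂) :
    2 * jointOrbitCount π₁ π₂ = cycleCount (π₁ * π₂) :=
  (card_orbitRel_zpowers_eq_two_mul h₁.1 h₂.1 h₁.2 h₂.2).symm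
end

section
/- For any two permutations π, ρ of a finite set I, #(π) + #(ρ) + #(πρ) ≤ |I| + 2·#(Π(π) ∨ Π(ρ)), where #(σ) is the number of cycles of σ and Π(σ) is the partition of I into orbits of σ. -/
open Equiv Equiv.Perm MulAction Subgroup

section OrbitRel

variable {G α : Type*} [Group G] [MulAction G α]

theorem orbitRel_closure_le {S : Set G} {r : Setoid α} (h : ∀ g ∈ S, ∀ x, r (g • x) x) :
    orbitRel (closure S) α ≤ r := by
  have key : ∀ g ∈ closure S, ∀ x, r (g • x) x := by
    intro g hg
    induction hg using closure_induction with
    | mem g hg => exact h g hg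
    | one => exact fun x => by rw [one_smul]
    | mul g₁ g₂ _ _ ih₁ ih₂ =>
      exact fun x => by rw [mul_smul]; exact r.trans (ih₁ _) (ih₂ x)
    | inv g _ ih => exact fun x => by simpa using r.symm (ih (g⁻¹ • x))
  rintro x y hxy
  obtain ⟨⟨g, hg⟩, rfl⟩ := orbitRel_apply.mp hxy
  exact key g hg y

theorem orbitRel_mono {H K : Subgroup G} (hHK : H ≤ K) : orbitRel H α ≤ orbitRel K α := by
  rintro x y hxy
  obtain ⟨⟨g, hg⟩, rfl⟩ := orbitRel_apply.mp hxy
  exact orbitRel_apply.mpr ⟨⟨g, hHK hg⟩, rfl⟩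

theorem card_orbitRel_quotient_le_of_le [Finite α] {H K : Subgroup G} (hHK : H ≤ K) :
    Nat.card (orbitRel.Quotient K α) ≤ Nat.card (orbitRel.Quotient H α) :=
  Nat.card_le_card_of_surjective (Quotient.map' id (orbitRel_mono hHK))
    (Quotient.ind fun x => ⟨Quotient.mk _ x, rfl⟩)

theorem card_orbitRel_quotient_le [Finite α] (H : Subgroup G) :
    Nat.card (orbitRel.Quotient H α) ≤ Nat.card α :=
  Nat.card_le_card_of_surjective _ Quotient.mk_surjective

end OrbitRel

noncomputable def orbitCount {α : Type*} (S : Set (Perm α)) : ℕ :=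
  Nat.card (orbitRel.Quotient (closure S) α)

section OrbitCount

variable {α : Type*}

theorem cycleCount_eq_orbitCount (σ : Perm α) : cycleCount σ = orbitCount {σ} := by
  rw [cycleCount, orbitCount, zpowers_eq_closure]

theorem jointOrbitCount_eq_orbitCount (π ρ : Perm α) :
    jointOrbitCount π ρ = orbitCount {π, ρ} :=
  rfl

theorem orbitRel_closure_singleton_iff (σ : Perm α) {x y : α} :
    orbitRel (closure {σ}) α x y ↔ σ.SameCycle y x := by
  rw [← zpowers_eq_closure, orbitRel_apply, mem_orbit_iff]
  constructor
  · rintro ⟨⟨g, hg⟩, rfl⟩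
    obtain ⟨k, rfl⟩ := mem_zpowers_iff.mp hg
    exact ⟨k, rfl⟩
  · rintro ⟨k, rfl⟩
    exact ⟨⟨σ ^ k, zpow_mem_zpowers σ k⟩, rfl⟩

theorem orbitCount_anti [Finite α] {S T : Set (Perm α)} (h : closure S ≤ closure T) :
    orbitCount T ≤ orbitCount S :=
  card_orbitRel_quotient_le_of_le h

variable [DecidableEq α] (S : Set (Perm α))

theorem orbitCount_insert_swap_of_rel {a b : α} (hab : orbitRel (closure S) α a b) :
    orbitCount (insert (swap a b) S) = orbitCount S := by
  suffices orbitRel (closure (insert (swap a b) S)) α = orbitRel (closure S) α by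
    simp only [orbitCount, orbitRel.Quotient, this]
  refine le_antisymm (orbitRel_closure_le ?_)
    (orbitRel_mono (closure_mono (Set.subset_insert _ _)))
  rintro g (rfl | hg) x
  · rcases eq_or_ne x a with rfl | hxa
    · simpa using (orbitRel _ α).symm hab
    rcases eq_or_ne x b with rfl | hxb
    · simpa using hab
    · simp [swap_apply_of_ne_of_ne hxa hxb]
  · exact orbitRel_apply.mpr ⟨⟨g, subset_closure hg⟩, rfl⟩

theorem orbitCount_le_orbitCount_insert_swap_add_one [Finite α] (a b : α) :
    orbitCount S ≤ orbitCount (insert (swap a b) S) + 1 := by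
  classical
  set s := orbitRel (closure S) α
  -- Every orbit of `S` other than that of `b` is the image under `φ` of an orbit of the
  -- larger group.
  let φ : α → Quotient s := fun x => if s x b then ⟦a⟧ else ⟦x⟧
  have hφ : orbitRel (closure (insert (swap a b) S)) α ≤ Setoid.ker φ := by
    refine orbitRel_closure_le ?_
    rintro g (rfl | hg) x
    · rcases eq_or_ne x a with rfl | hxa
      · simp [φ]
      rcases eq_or_ne x b with rfl | hxb
      · simp [φ]
      · simp [swap_apply_of_ne_of_ne hxa hxb]
    · have hgx : s (g • x) x := orbitRel_apply.mpr ⟨⟨g, subset_closure hg⟩, rfl⟩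
      show φ (g • x) = φ x
      simp only [φ, show s (g • x) b ↔ s x b from ⟨s.trans (s.symm hgx), s.trans hgx⟩,
        Quotient.sound hgx]
  let ψ : Option (orbitRel.Quotient (closure (insert (swap a b) S)) α) → Quotient s :=
    fun o => o.elim ⟦b⟧ (Quotient.lift φ hφ)
  have hψ : Function.Surjective ψ := by
    refine Quotient.ind fun x => ?_
    by_cases hxb : s x b
    · exact ⟨none, (Quotient.sound hxb).symm⟩
    · exact ⟨some ⟦x⟧, if_neg hxb⟩
  simpa [orbitCount, Finite.card_option] using Nat.card_le_card_of_surjective ψ hψ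

theorem orbitCount_insert_swap_add_one_le [Finite α] {a b : α}
    (hab : ¬ orbitRel (closure S) α a b) :
    orbitCount (insert (swap a b) S) + 1 ≤ orbitCount S := by
  have := Fintype.ofFinite α
  classical
  let μ := Quotient.map' (s₁ := orbitRel (closure S) α) id
    (orbitRel_mono (closure_mono (Set.subset_insert (swap a b) S)))
  have hμ : Function.Surjective μ := Quotient.ind fun x => ⟨⟦x⟧, rfl⟩
  have hμ' : ¬ Function.Injective μ := fun hinj =>
    hab (Quotient.exact (@hinj ⟦a⟧ ⟦b⟧ (Quotient.sound (orbitRel_apply.mpr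
      ⟨⟨swap a b, subset_closure (Set.mem_insert _ _)⟩, swap_apply_right a b⟩))))
  have := Fintype.card_lt_of_surjective_not_injective μ hμ hμ'
  rw [← Nat.card_eq_fintype_card, ← Nat.card_eq_fintype_card] at this
  exact this

end OrbitCount

section Cycles

variable {α : Type*} [DecidableEq α]

theorem mem_closure_insert_swap {S : Set (Perm α)} {σ : Perm α} {a b : α}
    (h : σ * swap a b ∈ closure S) : σ ∈ closure (insert (swap a b) S) := by
  simpa [mul_assoc] using
    mul_mem (closure_mono (Set.subset_insert _ _) h) (subset_closure (Set.mem_insert (swap a b) S))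

/-- Following `σ` from `σ a` until the first return to `a` never meets `b`, and along that path
`σ * swap a b` agrees with `σ`; since `(σ * swap a b) b = σ a`, the path joins `b` to `a`. -/
theorem sameCycle_mul_swap_of_not_sameCycle [Finite α] {σ : Perm α} {a b : α}
    (hab : ¬σ.SameCycle a b) : (σ * swap a b).SameCycle b a := by
  by_contra hba
  have path : ∀ k : ℕ, (σ * swap a b).SameCycle b ((σ ^ k) (σ a)) := by
    intro k
    induction k with
    | zero => simpa using sameCycle_apply_right.mpr (SameCycle.refl (σ * swap a b) b)
    | succ k ih =>
      have hxa : (σ ^ k) (σ a) ≠ a := fun he => hba (by rwa [he] at ih)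
      have hax : σ.SameCycle a ((σ ^ k) (σ a)) :=
        sameCycle_pow_right.mpr (sameCycle_apply_right.mpr (SameCycle.refl σ a))
      have hxb : (σ ^ k) (σ a) ≠ b := fun he => hab (by rwa [he] at hax)
      have hstep : (σ * swap a b) ((σ ^ k) (σ a)) = (σ ^ (k + 1)) (σ a) := by
        rw [pow_succ', mul_apply, mul_apply, swap_apply_of_ne_of_ne hxa hxb]
      exact hstep ▸ sameCycle_apply_right.mpr ih
  obtain ⟨k, hk⟩ := (sameCycle_apply_left.mpr (SameCycle.refl σ a)).exists_nat_pow_eq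
  exact hba (by simpa only [hk] using path k)

theorem cycleCount_mul_swap_le [Finite α] (σ : Perm α) (a b : α) :
    cycleCount (σ * swap a b) ≤ cycleCount σ + 1 := by
  rw [cycleCount_eq_orbitCount, cycleCount_eq_orbitCount]
  calc orbitCount {σ * swap a b}
      ≤ orbitCount (insert (swap a b) {σ * swap a b}) + 1 :=
        orbitCount_le_orbitCount_insert_swap_add_one _ a b
    _ ≤ orbitCount {σ} + 1 := by
        gcongr
        exact orbitCount_anti ((closure_le _).mpr (Set.singleton_subset_iff.mpr
          (mem_closure_insert_swap (subset_closure rfl))))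

theorem cycleCount_mul_swap_add_one_le [Finite α] {σ : Perm α} {a b : α}
    (hab : ¬σ.SameCycle a b) : cycleCount (σ * swap a b) + 1 ≤ cycleCount σ := by
  rw [cycleCount_eq_orbitCount, cycleCount_eq_orbitCount]
  have hmerged : orbitRel (closure {σ * swap a b}) α a b :=
    (orbitRel_closure_singleton_iff _).mpr (sameCycle_mul_swap_of_not_sameCycle hab)
  calc orbitCount {σ * swap a b} + 1
      = orbitCount (insert (swap a b) {σ * swap a b}) + 1 := by
        rw [orbitCount_insert_swap_of_rel _ hmerged]
    _ ≤ orbitCount (insert (swap a b) {σ}) + 1 := by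
        gcongr
        exact orbitCount_anti ((closure_le _).mpr
          (Set.insert_subset (subset_closure (Set.mem_insert _ _))
            (Set.singleton_subset_iff.mpr (mem_closure_insert_swap (subset_closure rfl)))))
    _ ≤ orbitCount {σ} := orbitCount_insert_swap_add_one_le _ fun h =>
        hab ((orbitRel_closure_singleton_iff σ).mp h).symm

theorem cycleCount_add_one_le_mul_swap_apply [Finite α] {σ : Perm α} {a : α} (ha : σ a ≠ a) :
    cycleCount σ + 1 ≤ cycleCount (σ * swap a (σ a)) := by
  have hfix : (σ * swap a (σ a)) (σ a) = σ a := by rw [mul_apply, swap_apply_right]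
  have := cycleCount_mul_swap_add_one_le (a := a) (b := σ a) fun h =>
    ha (h.symm.eq_of_left hfix)
  rwa [mul_assoc, swap_mul_self, mul_one] at this

theorem card_support_mul_swap_apply_lt [Fintype α] {ρ : Perm α} {a : α} (ha : ρ a ≠ a) :
    (ρ * swap a (ρ a)).support.card < ρ.support.card := by
  rw [mul_swap_eq_swap_mul]
  exact card_support_swap_mul (ρ.injective.ne ha)

end Cycles

section Genus

variable {α : Type*} [Finite α]

theorem genus_inequality_one (π : Perm α) :
    cycleCount π + cycleCount (1 : Perm α) + cycleCount (π * 1) ≤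
      Nat.card α + 2 * jointOrbitCount π 1 := by
  have hone : cycleCount (1 : Perm α) ≤ Nat.card α := card_orbitRel_quotient_le _
  have hjoin : cycleCount π ≤ jointOrbitCount π 1 := by
    rw [cycleCount_eq_orbitCount, jointOrbitCount_eq_orbitCount]
    exact orbitCount_anti ((closure_le _).mpr
      (Set.insert_subset (subset_closure rfl) (Set.singleton_subset_iff.mpr (one_mem _))))
  rw [mul_one]
  omega

theorem genus_inequality_of_mul_swap_apply [DecidableEq α] {π ρ : Perm α} {a : α}
    (ha : ρ a ≠ a)
    (h : cycleCount π + cycleCount (ρ * swap a (ρ a)) + cycleCount (π * (ρ * swap a (ρ a)))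
      ≤ Nat.card α + 2 * jointOrbitCount π (ρ * swap a (ρ a))) :
    cycleCount π + cycleCount ρ + cycleCount (π * ρ) ≤
      Nat.card α + 2 * jointOrbitCount π ρ := by
  set b := ρ a
  set ρ' := ρ * swap a b
  have hsplit : cycleCount ρ + 1 ≤ cycleCount ρ' := cycleCount_add_one_le_mul_swap_apply ha
  have hπρ : π * ρ' * swap a b = π * ρ := by
    simp only [ρ', mul_assoc, swap_mul_self, mul_one]
  have hjoin : orbitCount (insert (swap a b) {π, ρ'}) ≤ jointOrbitCount π ρ := by
    refine orbitCount_anti ((closure_le _).mpr (Set.insert_subset ?_ ?_))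
    · exact subset_closure (Set.mem_insert_of_mem _ (Set.mem_insert _ _))
    · exact Set.singleton_subset_iff.mpr
        (mem_closure_insert_swap (subset_closure (Set.mem_insert_of_mem _ rfl)))
  rw [jointOrbitCount_eq_orbitCount] at h
  by_cases hrel : orbitRel (closure {π, ρ'}) α a b
  · have hstep := cycleCount_mul_swap_le (π * ρ') a b
    rw [hπρ] at hstep
    rw [orbitCount_insert_swap_of_rel _ hrel] at hjoin
    omega
  · have hprod : closure {π * ρ'} ≤ closure {π, ρ'} :=
      (closure_le _).mpr (Set.singleton_subset_iff.mpr (mul_mem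
        (subset_closure (Set.mem_insert _ _)) (subset_closure (Set.mem_insert_of_mem _ rfl))))
    have hcyc : ¬(π * ρ').SameCycle a b := fun hc =>
      hrel (orbitRel_mono hprod ((orbitRel_closure_singleton_iff _).mpr hc.symm))
    have hmerge := cycleCount_mul_swap_add_one_le hcyc
    rw [hπρ] at hmerge
    have := orbitCount_le_orbitCount_insert_swap_add_one {π, ρ'} a b
    omega

end Genus

theorem stmt7 {I : Type*} [Fintype I] (π ρ : Equiv.Perm I) :
    cycleCount π + cycleCount ρ + cycleCount (π * ρ) ≤
      Fintype.card I + 2 * jointOrbitCount π ρ := by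
  classical
  rw [← Nat.card_eq_fintype_card]
  induction hn : ρ.support.card using Nat.strong_induction_on generalizing ρ with
  | _ n ih =>
    rcases eq_or_ne ρ 1 with rfl | hρ
    · exact genus_inequality_one π
    · obtain ⟨a, ha⟩ : ∃ a, ρ a ≠ a := not_forall.mp fun h => hρ (Perm.ext h)
      exact genus_inequality_of_mul_swap_apply ha
        (ih _ (hn ▸ card_support_mul_swap_apply_lt ha) _ rfl)
end

section
/- Let π₁, π₂ be pairings of [n]. If R ⊆ [n] is a set containing exactly one element of each pair of π₁ and exactly one element of each pair of π₂, then any two permutations σ₁, σ₂ ∈ Sₙ with σᵢ(standard pairing) = πᵢ and σᵢ({1,3,…,n−1}) = R satisfy sgn(σ₂σ₁⁻¹) = (−1)^{n/2 − #(π₁∨π₂)}. Moreover σ₂σ₁⁻¹ can be chosen to fix R pointwise and act as π₂π₁ on [n]∖R. -/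
/-- σ maps the standard pairing {{0,1},{2,3},…} of Fin n to the pairing π. -/
def MapsStd {n : ℕ} (σ π : Equiv.Perm (Fin n)) : Prop :=
  ∀ k : Fin n, k.1 % 2 = 0 → ∀ h1 : k.1 + 1 < n, π (σ k) = σ ⟨k.1 + 1, h1⟩

/-- The even positions of Fin n (the odd numbers in 1-indexed convention). -/
def Evens (n : ℕ) : Set (Fin n) := {k | k.1 % 2 = 0}

open Finset Equiv Equiv.Perm

namespace Equiv.Perm

variable {α : Type*}

section SameCycle

variable [Fintype α] [DecidableEq α]

theorem nat_card_quotient_sameCycle (σ : Perm α) :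
    Nat.card (Quotient (SameCycle.setoid σ)) =
      (Fintype.card α - #σ.support) + #σ.cycleFactorsFinset := by
  let φ : α → {x // x ∉ σ.support} ⊕ σ.cycleFactorsFinset := fun x =>
    if hx : x ∈ σ.support then .inr ⟨σ.cycleOf x, cycleOf_mem_cycleFactorsFinset_iff.2 hx⟩
    else .inl ⟨x, hx⟩
  have hφ : Function.Surjective φ := by
    rintro (⟨x, hx⟩ | ⟨c, hc⟩)
    · exact ⟨x, by simp only [φ, dif_neg hx]⟩
    · obtain ⟨x, hx⟩ := (mem_cycleFactorsFinset_iff.1 hc).1.nonempty_support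
      refine ⟨x, ?_⟩
      simp only [φ, dif_pos (mem_cycleFactorsFinset_support_le hc hx)]
      exact congrArg _ (Subtype.ext (cycle_is_cycleOf hx hc).symm)
  have hker : Setoid.ker φ = SameCycle.setoid σ := by
    ext x y
    rw [Setoid.ker_def]
    change _ ↔ σ.SameCycle x y
    by_cases hx : x ∈ σ.support <;> by_cases hy : y ∈ σ.support <;>
      simp only [φ, hx, hy, dite_true, dite_false, reduceCtorEq, Sum.inl.injEq, Sum.inr.injEq,
        Subtype.mk.injEq, false_iff]
    · exact ⟨fun h => (mem_support_cycleOf_iff.1 (h ▸ mem_support_cycleOf_iff.2 ⟨.refl _ _, hy⟩)).1,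
        SameCycle.cycleOf_eq⟩
    · exact fun h => hy (by rwa [h.symm.eq_of_left (notMem_support.1 hy)])
    · exact fun h => hx (by rwa [h.eq_of_left (notMem_support.1 hx)])
    · exact ⟨fun h => h ▸ .refl _ _, fun h => h.eq_of_left (notMem_support.1 hx)⟩
  rw [← hker, Nat.card_congr (Setoid.quotientKerEquivOfSurjective φ hφ), Nat.card_sum]
  simp only [Nat.card_eq_fintype_card, Fintype.card_subtype_compl, Fintype.card_coe]

theorem sign_eq_neg_one_pow_card_sub_card_quotient_sameCycle (σ : Perm α) :
    sign σ = (-1) ^ (Fintype.card α - Nat.card (Quotient (SameCycle.setoid σ))) := by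
  have hcard : Multiset.card σ.cycleType = #σ.cycleFactorsFinset := by simp [cycleType_def]
  have hcycles : 2 * #σ.cycleFactorsFinset ≤ #σ.support := by
    rw [← hcard, ← sum_cycleType, mul_comm, ← smul_eq_mul]
    exact Multiset.card_nsmul_le_sum fun _ => two_le_of_mem_cycleType
  have hsupport := σ.support.card_le_univ
  rw [sign_of_cycleType, sum_cycleType, hcard, nat_card_quotient_sameCycle,
    show #σ.support + #σ.cycleFactorsFinset =
      Fintype.card α - (Fintype.card α - #σ.support + #σ.cycleFactorsFinset) +
        2 * #σ.cycleFactorsFinset by omega, pow_add, pow_mul]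
  simp

end SameCycle

theorem apply_mem_iff_of_image_eq {f : Perm α} {s t : Set α} (h : f '' s = t) (x : α) :
    f x ∈ t ↔ x ∈ s :=
  h ▸ f.injective.mem_set_image

theorem sign_eq_one_of_preserves_transversal [Fintype α] [DecidableEq α] {s τ : Perm α}
    {E : Set α} [DecidablePred (· ∈ E)] (hs : s * s = 1) (hE : ∀ x, x ∈ E ↔ s x ∉ E)
    (hτE : ∀ x, τ x ∈ E ↔ x ∈ E) (hτs : ∀ x ∈ E, τ (s x) = s (τ x)) : sign τ = 1 := by
  set a := ofSubtype (τ.subtypePerm hτE)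
  have hss : ∀ x, s (s x) = x := fun x => by rw [← mul_apply, hs, one_apply]
  -- off `E`, `τ` is the `s`-conjugate of `a`, so `sign τ = (sign a) ^ 2`
  have hτ : τ = a * (s * a * s) := by
    ext x
    simp only [coe_mul, Function.comp_apply]
    by_cases hx : x ∈ E
    · rw [ofSubtype_apply_of_not_mem _ ((hE x).1 hx), hss, ofSubtype_apply_of_mem _ hx,
        subtypePerm_apply]
    · have hsx : s x ∈ E := by rwa [hE x, not_not] at hx
      have hτx : s (τ (s x)) = τ x := by rw [← hτs _ hsx, hss]
      rw [ofSubtype_apply_of_mem _ hsx, subtypePerm_apply, hτx,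
        ofSubtype_apply_of_not_mem _ (by rwa [hτE])]
  rw [hτ, map_mul, map_mul, map_mul]
  simp [mul_comm, mul_left_comm]

theorem orbitRel_closure_le {S : Set (Perm α)} {r : Setoid α} (h : ∀ s ∈ S, ∀ x, r (s x) x) :
    MulAction.orbitRel (Subgroup.closure S) α ≤ r := by
  let K : Subgroup (Perm α) :=
    { carrier := {σ | ∀ x, r (σ x) x}
      mul_mem' := fun ha hb x => r.trans' (ha _) (hb x)
      one_mem' := r.refl'
      inv_mem' := fun {σ} hσ x => r.symm' (by simpa using hσ (σ⁻¹ x)) }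
  rintro _ b ⟨⟨σ, hσ⟩, rfl⟩
  exact (Subgroup.closure_le K).2 h hσ b

section Pairing

variable {π π₁ π₂ : Perm α} {R : Set α}

theorem two_mul_card_notMem [Fintype α] [DecidablePred (· ∈ R)] (hR : ∀ x, x ∈ R ↔ π x ∉ R) :
    2 * Fintype.card {x // x ∉ R} = Fintype.card α := by
  have hswap := Fintype.card_congr (π.subtypeEquiv (p := (· ∈ R)) (q := (· ∉ R)) hR)
  have hcompl := Fintype.card_subtype_compl (· ∈ R)
  have hle := Fintype.card_subtype_le (· ∈ R)
  omega

theorem mul_apply_notMem_iff (hR₁ : ∀ x, x ∈ R ↔ π₁ x ∉ R) (hR₂ : ∀ x, x ∈ R ↔ π₂ x ∉ R)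
    (x : α) : (π₂ * π₁) x ∉ R ↔ x ∉ R := by
  rw [mul_apply, ← hR₂ (π₁ x), hR₁ x, not_not]

theorem orbitRel_closure_pair_le_comap [DecidablePred (· ∈ R)] (hπ₁ : π₁ * π₁ = 1)
    (hπ₂ : π₂ * π₂ = 1) (hR₁ : ∀ x, x ∈ R ↔ π₁ x ∉ R) (hR₂ : ∀ x, x ∈ R ↔ π₂ x ∉ R) :
    MulAction.orbitRel (Subgroup.closure {π₁, π₂}) α ≤
      (SameCycle.setoid (π₂ * π₁)).comap fun z => if z ∈ R then π₁ z else z := by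
  set g := π₂ * π₁
  set o : α → α := fun z => if z ∈ R then π₁ z else z
  have hπ₁π₁ : ∀ z, π₁ (π₁ z) = z := fun z => by rw [← mul_apply, hπ₁, one_apply]
  have hπ₂π₂ : ∀ z, π₂ (π₂ z) = z := fun z => by rw [← mul_apply, hπ₂, one_apply]
  have ho₁ : ∀ z, o (π₁ z) = o z := fun z => by
    by_cases hz : z ∈ R
    · simp only [o, if_pos hz, if_neg ((hR₁ z).1 hz)]
    · have hz' : π₁ z ∈ R := by rwa [hR₁ z, not_not] at hz
      simp only [o, if_pos hz', if_neg hz, hπ₁π₁]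
  have ho₂ : ∀ z, g.SameCycle (o (π₂ z)) (o z) := fun z => by
    by_cases hz : z ∈ R
    · simp only [o, if_pos hz, if_neg ((hR₂ z).1 hz)]
      have hg : π₂ z = g (π₁ z) := by simp only [g, mul_apply, hπ₁π₁]
      rw [hg]
      exact (sameCycle_apply_right.2 (.refl _ _)).symm
    · have hz' : π₂ z ∈ R := by rwa [hR₂ z, not_not] at hz
      simp only [o, if_pos hz', if_neg hz]
      have hg : z = g (π₁ (π₂ z)) := by simp only [g, mul_apply, hπ₁π₁, hπ₂π₂]
      nth_rewrite 2 [hg]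
      exact sameCycle_apply_right.2 (.refl _ _)
  refine orbitRel_closure_le fun s hs z => (Setoid.comap_rel _ _ _ _).2 ?_
  rcases hs with rfl | rfl
  exacts [ho₁ z ▸ .refl _ _, ho₂ z]

theorem orbitRel_closure_pair_iff_sameCycle (hπ₁ : π₁ * π₁ = 1) (hπ₂ : π₂ * π₂ = 1)
    (hR₁ : ∀ x, x ∈ R ↔ π₁ x ∉ R) (hR₂ : ∀ x, x ∈ R ↔ π₂ x ∉ R) {x y : α} (hx : x ∉ R)
    (hy : y ∉ R) :
    MulAction.orbitRel (Subgroup.closure {π₁, π₂}) α x y ↔ (π₂ * π₁).SameCycle x y := by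
  classical
  refine ⟨fun hxy => ?_, fun hxy => ?_⟩
  · have hoxy := (Setoid.comap_rel _ _ _ _).1 (orbitRel_closure_pair_le_comap hπ₁ hπ₂ hR₁ hR₂ hxy)
    simp only [if_neg hx, if_neg hy] at hoxy
    exact hoxy
  · obtain ⟨k, hk⟩ := hxy.symm
    have hg : π₂ * π₁ ∈ Subgroup.closure {π₁, π₂} :=
      mul_mem (Subgroup.subset_closure (Set.mem_insert_of_mem _ rfl))
        (Subgroup.subset_closure (Set.mem_insert _ _))
    exact ⟨⟨(π₂ * π₁) ^ k, zpow_mem hg k⟩, hk⟩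

theorem nat_card_quotient_sameCycle_subtypePerm (hπ₁ : π₁ * π₁ = 1) (hπ₂ : π₂ * π₂ = 1)
    (hR₁ : ∀ x, x ∈ R ↔ π₁ x ∉ R) (hR₂ : ∀ x, x ∈ R ↔ π₂ x ∉ R) :
    Nat.card (Quotient (SameCycle.setoid
        ((π₂ * π₁).subtypePerm (p := (· ∉ R)) (mul_apply_notMem_iff hR₁ hR₂)))) =
      jointOrbitCount π₁ π₂ := by
  set H : Subgroup (Perm α) := Subgroup.closure {π₁, π₂}
  let q (x : {x // x ∉ R}) : MulAction.orbitRel.Quotient H α := Quotient.mk _ x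
  have hq : Function.Surjective q := by
    rintro ⟨x⟩
    by_cases hx : x ∈ R
    · refine ⟨⟨π₁ x, (hR₁ x).1 hx⟩, Quotient.sound ?_⟩
      exact ⟨⟨π₁, Subgroup.subset_closure (Set.mem_insert _ _)⟩, rfl⟩
    · exact ⟨⟨x, hx⟩, rfl⟩
  have hker : Setoid.ker q = SameCycle.setoid
      ((π₂ * π₁).subtypePerm (p := (· ∉ R)) (mul_apply_notMem_iff hR₁ hR₂)) := by
    ext x y
    rw [Setoid.ker_def, Quotient.eq, orbitRel_closure_pair_iff_sameCycle hπ₁ hπ₂ hR₁ hR₂ x.2 y.2]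
    exact sameCycle_subtypePerm.symm
  rw [← hker, Nat.card_congr (Setoid.quotientKerEquivOfSurjective q hq)]
  rfl

theorem sign_ofSubtype_subtypePerm_mul [Fintype α] [DecidableEq α] [DecidablePred (· ∈ R)]
    (hπ₁ : π₁ * π₁ = 1) (hπ₂ : π₂ * π₂ = 1)
    (hR₁ : ∀ x, x ∈ R ↔ π₁ x ∉ R) (hR₂ : ∀ x, x ∈ R ↔ π₂ x ∉ R) :
    sign (ofSubtype ((π₂ * π₁).subtypePerm (p := (· ∉ R)) (mul_apply_notMem_iff hR₁ hR₂))) =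
      (-1) ^ (Fintype.card α / 2 - jointOrbitCount π₁ π₂) := by
  rw [sign_ofSubtype, sign_eq_neg_one_pow_card_sub_card_quotient_sameCycle,
    nat_card_quotient_sameCycle_subtypePerm hπ₁ hπ₂ hR₁ hR₂, ← two_mul_card_notMem hR₁,
    Nat.mul_div_cancel_left _ two_pos]

end Pairing

end Equiv.Perm

section StandardPairing

variable {n : ℕ} {π π₁ π₂ : Perm (Fin n)} {R : Set (Fin n)}

theorem exists_mapsStd_image_evens (hR : ∀ x, x ∈ R ↔ π x ∉ R) :
    ∃ σ : Perm (Fin n), MapsStd σ π ∧ σ '' Evens n = R := by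
  classical
  set m := Fintype.card {x // x ∉ R}
  have hn : n = 2 * m := by rw [← Fintype.card_fin n, ← two_mul_card_notMem hR]
  let e : Fin m ≃ {x // x ∈ R} :=
    ((π.subtypeEquiv (p := (· ∈ R)) (q := (· ∉ R)) hR).trans (Fintype.equivFin _)).symm
  let half (k : Fin n) : Fin m := ⟨k / 2, by omega⟩
  let f (k : Fin n) : Fin n := if k.1 % 2 = 0 then e (half k) else π (e (half k))
  have hf_mem : ∀ k, f k ∈ R ↔ k.1 % 2 = 0 := fun k => by
    by_cases hk : k.1 % 2 = 0
    · simp only [f, if_pos hk, (e _).2, hk]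
    · simp only [f, if_neg hk, hk, iff_false, ← hR]
      exact (e _).2
  have hf : Function.Injective f := fun k l hkl => by
    have hpar : k.1 % 2 = l.1 % 2 := by
      have := (hf_mem k).symm.trans (hkl ▸ hf_mem l)
      omega
    have hhalf : half k = half l := e.injective <| Subtype.ext <| by
      by_cases hk : k.1 % 2 = 0
      · simpa only [f, if_pos hk, if_pos (hpar ▸ hk)] using hkl
      · simpa only [f, if_neg hk, if_neg (hpar ▸ hk), π.apply_eq_iff_eq] using hkl
    have := congrArg Fin.val hhalf
    exact Fin.ext (by simp only [half] at this; omega)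
  refine ⟨Equiv.ofBijective f (Finite.injective_iff_bijective.1 hf), fun k hk h1 => ?_, ?_⟩
  · have hhalf : half ⟨k.1 + 1, h1⟩ = half k := Fin.ext (by simp only [half]; omega)
    simp only [Equiv.ofBijective_apply, f, if_pos hk, if_neg (show ¬ (k.1 + 1) % 2 = 0 by omega),
      hhalf]
  · ext x
    refine ⟨?_, fun hx => ?_⟩
    · rintro ⟨k, hk, rfl⟩
      exact (hf_mem k).2 hk
    · let j := e.symm ⟨x, hx⟩
      have hk : (2 * j.1) % 2 = 0 := by omega
      refine ⟨⟨2 * j, by omega⟩, hk, ?_⟩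
      have hhalf : half ⟨2 * j, by omega⟩ = j := Fin.ext (by simp only [half]; omega)
      simp only [Equiv.ofBijective_apply, f, if_pos hk, hhalf, j, Equiv.apply_symm_apply]

theorem sign_eq_of_mapsStd (hπ : π * π = 1) (hR : ∀ x, x ∈ R ↔ π x ∉ R) {σ σ' : Perm (Fin n)}
    (hσ : MapsStd σ π) (hσ' : MapsStd σ' π) (hσR : σ '' Evens n = R) (hσ'R : σ' '' Evens n = R) :
    sign σ = sign σ' := by
  classical
  have hn := two_mul_card_notMem hR
  rw [Fintype.card_fin] at hn
  have hτ : sign (σ' * σ⁻¹) = 1 := by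
    refine sign_eq_one_of_preserves_transversal hπ hR (fun x => ?_) ?_
    · rw [mul_apply, apply_mem_iff_of_image_eq hσ'R, ← apply_mem_iff_of_image_eq hσR, coe_inv,
        apply_symm_apply]
    · rw [← hσR]
      rintro _ ⟨k, hk, rfl⟩
      have h1 : k.1 + 1 < n := by change k.1 % 2 = 0 at hk; omega
      simp only [mul_apply, coe_inv, symm_apply_apply, hσ k hk h1, hσ' k hk h1]
  rw [map_mul, sign_inv, mul_eq_one_iff_eq_inv, Int.units_inv_eq_self] at hτ
  exact hτ.symm

theorem MapsStd.mul_left (hπ₁ : π₁ * π₁ = 1) (hR₁ : ∀ x, x ∈ R ↔ π₁ x ∉ R)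
    {σ ρ : Perm (Fin n)} (hσ : MapsStd σ π₁) (hσR : σ '' Evens n = R)
    (hρR : ∀ x ∈ R, ρ x = x) (hρRc : ∀ x ∉ R, ρ x = (π₂ * π₁) x) : MapsStd (ρ * σ) π₂ := by
  intro k hk h1
  have hσk : σ k ∈ R := (apply_mem_iff_of_image_eq hσR k).2 hk
  rw [mul_apply, mul_apply, ← hσ k hk h1, hρRc _ ((hR₁ _).1 hσk), hρR _ hσk, mul_apply,
    ← mul_apply π₁ π₁, hπ₁, one_apply]

end StandardPairing

theorem stmt13_general (n : ℕ) (π₁ π₂ : Equiv.Perm (Fin n))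
    (h₁ : IsPairing π₁) (h₂ : IsPairing π₂) (R : Set (Fin n))
    (hR₁ : ∀ x, x ∈ R ↔ π₁ x ∉ R) (hR₂ : ∀ x, x ∈ R ↔ π₂ x ∉ R) :
    -- any two permutations realizing the pairings with representatives R
    -- give the stated sign:
    (∀ σ₁ σ₂ : Equiv.Perm (Fin n), MapsStd σ₁ π₁ → MapsStd σ₂ π₂ →
      (⇑σ₁) '' Evens n = R → (⇑σ₂) '' Evens n = R →
      Equiv.Perm.sign (σ₂ * σ₁⁻¹) = (-1) ^ (n / 2 - jointOrbitCount π₁ π₂)) ∧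
    -- moreover σ₂σ₁⁻¹ can be chosen to fix R pointwise and act as π₂π₁ on the
    -- complement of R:
    ∃ σ₁ σ₂ : Equiv.Perm (Fin n), MapsStd σ₁ π₁ ∧ MapsStd σ₂ π₂ ∧
      (⇑σ₁) '' Evens n = R ∧ (⇑σ₂) '' Evens n = R ∧
      (∀ x ∈ R, (σ₂ * σ₁⁻¹) x = x) ∧
      (∀ x ∉ R, (σ₂ * σ₁⁻¹) x = (π₂ * π₁) x) := by
  classical
  obtain ⟨σ₁, hσ₁, hσ₁R⟩ := exists_mapsStd_image_evens hR₁
  set ρ := ofSubtype ((π₂ * π₁).subtypePerm (p := (· ∉ R)) (mul_apply_notMem_iff hR₁ hR₂))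
  have hρR : ∀ x ∈ R, ρ x = x := fun x hx =>
    ofSubtype_apply_of_not_mem (p := (· ∉ R)) _ (not_not.2 hx)
  have hρRc : ∀ x ∉ R, ρ x = (π₂ * π₁) x := fun x hx =>
    ofSubtype_apply_of_mem (p := (· ∉ R)) _ hx
  have hσ₂ : MapsStd (ρ * σ₁) π₂ := hσ₁.mul_left h₁.1 hR₁ hσ₁R hρR hρRc
  have hσ₂R : ⇑(ρ * σ₁) '' Evens n = R := by
    rw [coe_mul, Set.image_comp, hσ₁R, Set.image_congr hρR, Set.image_id']
  refine ⟨fun σ σ' hσ hσ' hσR hσ'R => ?_, σ₁, ρ * σ₁, hσ₁, hσ₂, hσ₁R, hσ₂R, ?_, ?_⟩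
  · rw [map_mul, sign_inv, sign_eq_of_mapsStd h₂.1 hR₂ hσ' hσ₂ hσ'R hσ₂R,
      sign_eq_of_mapsStd h₁.1 hR₁ hσ hσ₁ hσR hσ₁R, map_mul, mul_assoc, Int.units_mul_self, mul_one,
      sign_ofSubtype_subtypePerm_mul h₁.1 h₂.1 hR₁ hR₂, Fintype.card_fin]
  · simpa only [mul_inv_cancel_right] using hρR
  · simpa only [mul_inv_cancel_right] using hρRc

theorem stmt13 (n : ℕ) (hn : Even n) (π₁ π₂ : Equiv.Perm (Fin n))
    (h₁ : IsPairing π₁) (h₂ : IsPairing π₂) (R : Set (Fin n))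
    (hR₁ : ∀ x, x ∈ R ↔ π₁ x ∉ R) (hR₂ : ∀ x, x ∈ R ↔ π₂ x ∉ R) :
    -- any two permutations realizing the pairings with representatives R
    -- give the stated sign:
    (∀ σ₁ σ₂ : Equiv.Perm (Fin n), MapsStd σ₁ π₁ → MapsStd σ₂ π₂ →
      (⇑σ₁) '' Evens n = R → (⇑σ₂) '' Evens n = R →
      Equiv.Perm.sign (σ₂ * σ₁⁻¹) = (-1) ^ (n / 2 - jointOrbitCount π₁ π₂)) ∧
    -- moreover σ₂σ₁⁻¹ can be chosen to fix R pointwise and act as π₂π₁ on the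
    -- complement of R:
    ∃ σ₁ σ₂ : Equiv.Perm (Fin n), MapsStd σ₁ π₁ ∧ MapsStd σ₂ π₂ ∧
      (⇑σ₁) '' Evens n = R ∧ (⇑σ₂) '' Evens n = R ∧
      (∀ x ∈ R, (σ₂ * σ₁⁻¹) x = x) ∧
      (∀ x ∉ R, (σ₂ * σ₁⁻¹) x = (π₂ * π₁) x) :=
  stmt13_general n π₁ π₂ h₁ h₂ R hR₁ hR₂
end

section
/- For every block B of the join π₁ ∨ π₂ of two pairings π₁, π₂ of a finite set I, the block B has even cardinality, and B is the disjoint union of exactly two orbits of the permutation π₁π₂, which are interchanged by π₁ (and by π₂). -/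
section aux
variable {I : Type*}

lemma pairing_inv {π : Equiv.Perm I} (h : IsPairing π) : π⁻¹ = π :=
  inv_eq_of_mul_eq_one_right h.1

lemma pairing_apply_apply {π : Equiv.Perm I} (h : IsPairing π) (y : I) : π (π y) = y := by
  have := congrArg (fun g : Equiv.Perm I => g y) h.1
  simpa using this

lemma mem_orbit_zpow_iff (g : Equiv.Perm I) (a b : I) :
    b ∈ MulAction.orbit (Subgroup.zpowers g) a ↔ ∃ n : ℤ, (g ^ n) a = b := by
  constructor
  · rintro ⟨⟨_, n, rfl⟩, rfl⟩
    exact ⟨n, rfl⟩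
  · rintro ⟨n, rfl⟩
    exact ⟨⟨g ^ n, n, rfl⟩, rfl⟩

lemma conj_zpow_swap {π σ : Equiv.Perm I} (h : π * σ * π⁻¹ = σ⁻¹) (n : ℤ) :
    π * σ ^ n = σ ^ (-n) * π := by
  have := congrArg (· ^ n) h
  simp only [conj_zpow] at this
  rw [inv_zpow, ← zpow_neg] at this
  rw [← this]
  group

lemma conj_zpow_apply {π σ : Equiv.Perm I} (h : π * σ * π⁻¹ = σ⁻¹) (n : ℤ) (y : I) :
    π ((σ ^ n) y) = (σ ^ (-n)) (π y) := by
  have := congrArg (fun g : Equiv.Perm I => g y) (conj_zpow_swap h n)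
  simpa using this

lemma conj1 {π₁ π₂ : Equiv.Perm I} (h₁ : IsPairing π₁) (h₂ : IsPairing π₂) :
    π₁ * (π₁ * π₂) * π₁⁻¹ = (π₁ * π₂)⁻¹ := by
  rw [mul_inv_rev, pairing_inv h₁, pairing_inv h₂]
  calc π₁ * (π₁ * π₂) * π₁ = (π₁ * π₁) * (π₂ * π₁) := by group
  _ = π₂ * π₁ := by rw [h₁.1, one_mul]

lemma conj2 {π₁ π₂ : Equiv.Perm I} (h₁ : IsPairing π₁) (h₂ : IsPairing π₂) :
    π₂ * (π₁ * π₂) * π₂⁻¹ = (π₁ * π₂)⁻¹ := by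
  rw [mul_inv_rev, pairing_inv h₁, pairing_inv h₂]
  calc π₂ * (π₁ * π₂) * π₂ = π₂ * π₁ * (π₂ * π₂) := by group
  _ = π₂ * π₁ := by rw [h₂.1, mul_one]

lemma pi2_x {π₁ π₂ : Equiv.Perm I} (h₁ : IsPairing π₁) (h₂ : IsPairing π₂) (x : I) :
    π₂ x = ((π₁ * π₂) ^ (-1 : ℤ)) (π₁ x) := by
  have h' : ((π₁ * π₂) ^ (-1 : ℤ)) = π₂ * π₁ := by
    rw [zpow_neg_one, mul_inv_rev, pairing_inv h₁, pairing_inv h₂]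
  rw [h', Equiv.Perm.mul_apply, pairing_apply_apply h₁]

lemma image_orbit_pi1 {π₁ π₂ : Equiv.Perm I} (h₁ : IsPairing π₁) (h₂ : IsPairing π₂) (y : I) :
    (⇑π₁) '' MulAction.orbit (Subgroup.zpowers (π₁ * π₂)) y =
      MulAction.orbit (Subgroup.zpowers (π₁ * π₂)) (π₁ y) := by
  ext z
  simp only [Set.mem_image, mem_orbit_zpow_iff]
  constructor
  · rintro ⟨w, ⟨n, rfl⟩, rfl⟩
    exact ⟨-n, (conj_zpow_apply (conj1 h₁ h₂) n y).symm⟩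
  · rintro ⟨n, rfl⟩
    exact ⟨((π₁ * π₂) ^ (-n)) y, ⟨-n, rfl⟩,
      by rw [conj_zpow_apply (conj1 h₁ h₂), neg_neg]⟩

lemma image_orbit_pi2 {π₁ π₂ : Equiv.Perm I} (h₁ : IsPairing π₁) (h₂ : IsPairing π₂) (x : I) :
    (⇑π₂) '' MulAction.orbit (Subgroup.zpowers (π₁ * π₂)) x =
      MulAction.orbit (Subgroup.zpowers (π₁ * π₂)) (π₁ x) := by
  ext z
  simp only [Set.mem_image, mem_orbit_zpow_iff]
  constructor
  · rintro ⟨w, ⟨n, rfl⟩, rfl⟩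
    refine ⟨-n + -1, ?_⟩
    rw [conj_zpow_apply (conj2 h₁ h₂) n x, pi2_x h₁ h₂ x]
    conv_rhs => rw [← Equiv.Perm.mul_apply, ← zpow_add]
  · rintro ⟨n, rfl⟩
    refine ⟨((π₁ * π₂) ^ (-n + -1)) x, ⟨-n + -1, rfl⟩, ?_⟩
    rw [conj_zpow_apply (conj2 h₁ h₂) (-n + -1) x, pi2_x h₁ h₂ x]
    conv_lhs => rw [← Equiv.Perm.mul_apply, ← zpow_add]
    congr 2
    omega

lemma pi1x_not_mem {π₁ π₂ : Equiv.Perm I} (h₁ : IsPairing π₁) (h₂ : IsPairing π₂) (x : I) :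
    π₁ x ∉ MulAction.orbit (Subgroup.zpowers (π₁ * π₂)) x := by
  rw [mem_orbit_zpow_iff]
  rintro ⟨n, hn⟩
  rcases Int.even_or_odd n with ⟨k, hk⟩ | ⟨k, hk⟩
  · apply h₁.2 (((π₁ * π₂) ^ k) x)
    rw [conj_zpow_apply (conj1 h₁ h₂) k x, ← hn]
    conv_lhs => rw [← Equiv.Perm.mul_apply, ← zpow_add]
    congr 2
    omega
  · apply h₂.2 (((π₁ * π₂) ^ k) x)
    rw [conj_zpow_apply (conj2 h₁ h₂) k x, pi2_x h₁ h₂ x, ← hn]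
    conv_lhs => rw [← Equiv.Perm.mul_apply, ← zpow_add, ← Equiv.Perm.mul_apply, ← zpow_add]
    congr 2
    omega

end aux

theorem stmt14 {I : Type*} [Fintype I] (π₁ π₂ : Equiv.Perm I)
    (h₁ : IsPairing π₁) (h₂ : IsPairing π₂) (x : I) :
    -- the block of the join π₁ ∨ π₂ through x is the orbit of the subgroup
    -- generated by π₁ and π₂; it is the disjoint union of the two orbits of
    -- π₁π₂ through x and through π₁ x, which are interchanged by π₁ and by π₂,
    -- and it has even cardinality:
    Disjoint (MulAction.orbit (Subgroup.zpowers (π₁ * π₂)) x)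
      (MulAction.orbit (Subgroup.zpowers (π₁ * π₂)) (π₁ x)) ∧
    MulAction.orbit (Subgroup.zpowers (π₁ * π₂)) x ∪
        MulAction.orbit (Subgroup.zpowers (π₁ * π₂)) (π₁ x) =
      MulAction.orbit (Subgroup.closure {π₁, π₂} : Subgroup (Equiv.Perm I)) x ∧
    (⇑π₁) '' MulAction.orbit (Subgroup.zpowers (π₁ * π₂)) x =
      MulAction.orbit (Subgroup.zpowers (π₁ * π₂)) (π₁ x) ∧
    (⇑π₂) '' MulAction.orbit (Subgroup.zpowers (π₁ * π₂)) x =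
      MulAction.orbit (Subgroup.zpowers (π₁ * π₂)) (π₁ x) ∧
    Even (Nat.card
      (MulAction.orbit (Subgroup.closure {π₁, π₂} : Subgroup (Equiv.Perm I)) x)) := by
  classical
  have hnot := pi1x_not_mem h₁ h₂ x
  have hdisj : Disjoint (MulAction.orbit (Subgroup.zpowers (π₁ * π₂)) x)
      (MulAction.orbit (Subgroup.zpowers (π₁ * π₂)) (π₁ x)) := by
    rw [Set.disjoint_left]
    intro a ha ha'
    have e1 := MulAction.orbit_eq_iff.2 ha
    have e2 := MulAction.orbit_eq_iff.2 ha'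
    exact hnot ((e2.symm.trans e1) ▸ MulAction.mem_orbit_self (π₁ x))
  have himg1 := image_orbit_pi1 h₁ h₂ x
  have himg2 := image_orbit_pi2 h₁ h₂ x
  have hunion : MulAction.orbit (Subgroup.zpowers (π₁ * π₂)) x ∪
      MulAction.orbit (Subgroup.zpowers (π₁ * π₂)) (π₁ x) =
      MulAction.orbit (Subgroup.closure {π₁, π₂} : Subgroup (Equiv.Perm I)) x := by
    have hle : Subgroup.zpowers (π₁ * π₂) ≤ Subgroup.closure {π₁, π₂} := by
      rw [Subgroup.zpowers_le]
      exact mul_mem (Subgroup.subset_closure (by simp)) (Subgroup.subset_closure (by simp))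
    have hmem1 : π₁ ∈ Subgroup.closure ({π₁, π₂} : Set (Equiv.Perm I)) :=
      Subgroup.subset_closure (by simp)
    apply Set.Subset.antisymm
    · rintro a (ha | ha)
      · rcases (mem_orbit_zpow_iff _ x a).1 ha with ⟨n, rfl⟩
        exact ⟨⟨(π₁ * π₂) ^ n, hle ⟨n, rfl⟩⟩, rfl⟩
      · rcases (mem_orbit_zpow_iff _ (π₁ x) a).1 ha with ⟨n, rfl⟩
        exact ⟨⟨(π₁ * π₂) ^ n * π₁, mul_mem (hle ⟨n, rfl⟩) hmem1⟩, rfl⟩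
    · rintro a ⟨⟨g, hg⟩, rfl⟩
      show g x ∈ _
      have step : ∀ u ∈ ({π₁, π₂} : Set (Equiv.Perm I)), ∀ y : I,
          y ∈ MulAction.orbit (Subgroup.zpowers (π₁ * π₂)) x ∪
              MulAction.orbit (Subgroup.zpowers (π₁ * π₂)) (π₁ x) →
          u y ∈ MulAction.orbit (Subgroup.zpowers (π₁ * π₂)) x ∪
              MulAction.orbit (Subgroup.zpowers (π₁ * π₂)) (π₁ x) := by
        rintro u hu y hy
        have key : ∀ π : Equiv.Perm I, IsPairing π →
            ((⇑π) '' MulAction.orbit (Subgroup.zpowers (π₁ * π₂)) x =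
              MulAction.orbit (Subgroup.zpowers (π₁ * π₂)) (π₁ x)) →
            π y ∈ MulAction.orbit (Subgroup.zpowers (π₁ * π₂)) x ∪
              MulAction.orbit (Subgroup.zpowers (π₁ * π₂)) (π₁ x) := by
          intro π hπ himg
          rcases hy with h | h
          · exact Or.inr (himg ▸ Set.mem_image_of_mem _ h)
          · rw [← himg] at h
            rcases h with ⟨w, hw, rfl⟩
            rw [pairing_apply_apply hπ]
            exact Or.inl hw
        rcases hu with rfl | hu
        · exact key _ h₁ himg1
        · rw [Set.mem_singleton_iff] at hu
          subst hu
          exact key _ h₂ himg2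
      induction hg using Subgroup.closure_induction_left with
      | one => exact Or.inl (MulAction.mem_orbit_self x)
      | mul_left u hu g' hg' ih => exact step u hu (g' x) ih
      | inv_mul_cancel u hu g' hg' ih =>
        have huinv : u⁻¹ = u := by
          rcases hu with rfl | hu
          · exact pairing_inv h₁
          · rw [Set.mem_singleton_iff] at hu; subst hu; exact pairing_inv h₂
        rw [show (u⁻¹ * g') x = u⁻¹ (g' x) from rfl, huinv]
        exact step u hu (g' x) ih
  refine ⟨hdisj, hunion, himg1, himg2, ?_⟩
  rw [← hunion]
  rw [Nat.card_eq_card_toFinset, Set.toFinset_union]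
  rw [Finset.card_union_of_disjoint (by
    rw [Finset.disjoint_left]
    intro a ha ha'
    rw [Set.mem_toFinset] at ha ha'
    exact Set.disjoint_left.1 hdisj ha ha')]
  have hcardeq : (MulAction.orbit (Subgroup.zpowers (π₁ * π₂)) x).toFinset.card =
      (MulAction.orbit (Subgroup.zpowers (π₁ * π₂)) (π₁ x)).toFinset.card := by
    rw [← himg1, Set.toFinset_image, Finset.card_image_of_injective _ π₁.injective]
  rw [← hcardeq]
  exact ⟨_, rfl⟩
end

section
/- The map π ↦ πδπ (where π ∈ P₂(n) is extended to ±[n] by acting as π on positives and as δπδ on negatives, and δ is negation) is a bijection between the pairings of [n] and the set of permutations α of ±[n] that are simultaneously: involutions without fixed points (pairings of ±[n]), elements of PM(n) (δαδ = α⁻¹, no cycle containing both k and −k), and alternating (α always maps positives to negatives and vice versa). Explicitly, if {k,l} is a pair of π, then {k,−l} and {−k,l} are pairs of πδπ. -/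
/-- The set `±[n] = {−n,…,−1,1,…,n}` of nonzero integers of absolute value at most `n`. -/
abbrev SignedIdx (n : ℕ) := {k : ℤ // k ≠ 0 ∧ k.natAbs ≤ n}

/-- The negation map `δ : k ↦ −k` on `±[n]`, as a permutation. -/
def negSigned (n : ℕ) : Equiv.Perm (SignedIdx n) :=
  Function.Involutive.toPerm
    (fun k => ⟨-k.1, by simpa [Int.natAbs_neg] using k.2⟩)
    (fun k => by ext1; simp)

/-- A pairing of `[n]` extended to `±[n]` by the identity on negative integers:
an involution fixing every negative element and moving every positive element. -/
def PosPairing (n : ℕ) (π : Equiv.Perm (SignedIdx n)) : Prop :=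
  π * π = 1 ∧ (∀ k : SignedIdx n, k.1 < 0 → π k = k) ∧
    ∀ k : SignedIdx n, 0 < k.1 → π k ≠ k

namespace Stmt15Aux

variable {n : ℕ}

lemma negSigned_val (k : SignedIdx n) : (negSigned n k).1 = -k.1 := rfl

lemma negSigned_negSigned (k : SignedIdx n) : negSigned n (negSigned n k) = k := by
  ext1; simp [negSigned_val]

lemma pos_or_neg (k : SignedIdx n) : 0 < k.1 ∨ k.1 < 0 := by
  rcases lt_trichotomy k.1 0 with h | h | h
  · exact Or.inr h
  · exact absurd h k.2.1
  · exact Or.inl h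

lemma invol_apply {π : Equiv.Perm (SignedIdx n)} (h : π * π = 1) (k : SignedIdx n) :
    π (π k) = k := by
  have := Equiv.ext_iff.mp h k
  simpa [Equiv.Perm.mul_apply] using this

lemma pos_of_pos {π : Equiv.Perm (SignedIdx n)} (h : PosPairing n π)
    {k : SignedIdx n} (hk : 0 < k.1) : 0 < (π k).1 := by
  rcases pos_or_neg (π k) with h' | h'
  · exact h'
  · exfalso
    have h1 : π (π k) = π k := h.2.1 _ h'
    have h2 : π (π k) = k := invol_apply h.1 k
    exact h.2.2 k hk (h1.symm.trans h2)

/-- Computation of `π δ π` on a positive element. -/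
lemma comp_pos {π : Equiv.Perm (SignedIdx n)} (h : PosPairing n π)
    {k : SignedIdx n} (hk : 0 < k.1) :
    (π * negSigned n * π) k = negSigned n (π k) := by
  have hp : 0 < (π k).1 := pos_of_pos h hk
  have hneg : (negSigned n (π k)).1 < 0 := by rw [negSigned_val]; omega
  simp only [Equiv.Perm.mul_apply]
  exact h.2.1 _ hneg

/-- Computation of `π δ π` on a negative element. -/
lemma comp_neg {π : Equiv.Perm (SignedIdx n)} (h : PosPairing n π)
    {k : SignedIdx n} (hk : k.1 < 0) :
    (π * negSigned n * π) k = π (negSigned n k) := by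
  simp only [Equiv.Perm.mul_apply]
  rw [h.2.1 k hk]

lemma zpow_invol {α : Equiv.Perm (SignedIdx n)} (h : α * α = 1) (i : ℤ) :
    α ^ i = 1 ∨ α ^ i = α := by
  have h2 : α ^ (2 : ℤ) = 1 := by
    have : α ^ (2 : ℤ) = α * α := by
      rw [show (2 : ℤ) = 1 + 1 by norm_num, zpow_add, zpow_one]
    rw [this, h]
  rcases Int.even_or_odd i with ⟨j, hj⟩ | ⟨j, hj⟩
  · left
    rw [hj, ← two_mul, zpow_mul, h2, one_zpow]
  · right
    rw [hj, zpow_add, zpow_one, zpow_mul, h2, one_zpow, one_mul]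

end Stmt15Aux

open Stmt15Aux in
theorem stmt15 (n : ℕ) :
    Set.BijOn (fun π => π * negSigned n * π)
      {π : Equiv.Perm (SignedIdx n) | PosPairing n π}
      {α : Equiv.Perm (SignedIdx n) |
        -- α is a pairing of ±[n]:
        α * α = 1 ∧ (∀ k, α k ≠ k) ∧
        -- α is a premap (element of PM(n)):
        negSigned n * α * negSigned n = α⁻¹ ∧ (∀ k, ¬ α.SameCycle k (negSigned n k)) ∧
        -- α is alternating:
        (∀ k : SignedIdx n, 0 < k.1 ↔ ((α k).1 < 0))} ∧
    -- explicitly, if {k, l} is a pair of π (with k, l positive), then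
    -- {k, −l} and {−k, l} are pairs of π δ π:
    ∀ π : Equiv.Perm (SignedIdx n), PosPairing n π →
      ∀ k : SignedIdx n, 0 < k.1 →
        (π * negSigned n * π) k = negSigned n (π k) ∧
        (π * negSigned n * π) (negSigned n k) = π k := by
  constructor
  · refine ⟨?_, ?_, ?_⟩
    · -- MapsTo
      intro π hπ
      simp only [Set.mem_setOf_eq] at hπ ⊢
      -- pointwise formulas for α := π δ π
      have hApos : ∀ k : SignedIdx n, 0 < k.1 →
          (π * negSigned n * π) k = negSigned n (π k) := fun k hk => comp_pos hπ hk
      have hAneg : ∀ k : SignedIdx n, k.1 < 0 →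
          (π * negSigned n * π) k = π (negSigned n k) := fun k hk => comp_neg hπ hk
      have hposval : ∀ k : SignedIdx n, 0 < k.1 → ((π * negSigned n * π) k).1 < 0 := by
        intro k hk
        rw [hApos k hk, negSigned_val]
        have := pos_of_pos hπ hk
        omega
      have hnegval : ∀ k : SignedIdx n, k.1 < 0 → 0 < ((π * negSigned n * π) k).1 := by
        intro k hk
        rw [hAneg k hk]
        exact pos_of_pos hπ (by rw [negSigned_val]; omega)
      have haa : ∀ k, (π * negSigned n * π) ((π * negSigned n * π) k) = k := by
        intro k
        rcases pos_or_neg k with hk | hk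
        · rw [hApos k hk]
          have hneg : (negSigned n (π k)).1 < 0 := by
            rw [negSigned_val]; have := pos_of_pos hπ hk; omega
          rw [hAneg _ hneg, negSigned_negSigned, invol_apply hπ.1]
        · rw [hAneg k hk]
          have hpos : 0 < (π (negSigned n k)).1 :=
            pos_of_pos hπ (by rw [negSigned_val]; omega)
          rw [hApos _ hpos, invol_apply hπ.1, negSigned_negSigned]
      have hinv : (π * negSigned n * π) * (π * negSigned n * π) = 1 := by
        apply Equiv.ext
        intro k
        simp only [Equiv.Perm.mul_apply, Equiv.Perm.one_apply]
        have := haa k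
        simpa only [Equiv.Perm.mul_apply] using this
      have hne : ∀ k, (π * negSigned n * π) k ≠ k := by
        intro k hk
        rcases pos_or_neg k with h | h
        · have := hposval k h; rw [hk] at this; omega
        · have := hnegval k h; rw [hk] at this; omega
      have hainv : (π * negSigned n * π)⁻¹ = (π * negSigned n * π) :=
        inv_eq_of_mul_eq_one_left hinv
      have hdelta : negSigned n * (π * negSigned n * π) * negSigned n
          = (π * negSigned n * π)⁻¹ := by
        rw [hainv]
        apply Equiv.ext
        intro k
        simp only [Equiv.Perm.mul_apply]
        show negSigned n ((π * negSigned n * π) (negSigned n k)) = (π * negSigned n * π) k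
        rcases pos_or_neg k with h | h
        · have hk' : (negSigned n k).1 < 0 := by rw [negSigned_val]; omega
          rw [hAneg _ hk', negSigned_negSigned, hApos k h]
        · have hk' : 0 < (negSigned n k).1 := by rw [negSigned_val]; omega
          rw [hApos _ hk', negSigned_negSigned, hAneg k h]
      have hsc : ∀ k, ¬ (π * negSigned n * π).SameCycle k (negSigned n k) := by
        rintro k ⟨i, hi⟩
        rcases zpow_invol hinv i with h | h <;> rw [h] at hi
        · simp only [Equiv.Perm.one_apply] at hi
          have h0 := congrArg Subtype.val hi
          rw [negSigned_val] at h0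
          exact k.2.1 (by omega)
        · rcases pos_or_neg k with hk | hk
          · rw [hApos k hk] at hi
            have hval : -(π k).1 = -k.1 := by
              have := congrArg Subtype.val hi
              rw [negSigned_val, negSigned_val] at this
              exact this
            exact hπ.2.2 k hk (Subtype.ext (by omega))
          · rw [hAneg k hk] at hi
            have hk' : 0 < (negSigned n k).1 := by rw [negSigned_val]; omega
            exact hπ.2.2 _ hk' hi
      have halt : ∀ k : SignedIdx n, 0 < k.1 ↔ (((π * negSigned n * π) k).1 < 0) := by
        intro k
        constructor
        · exact hposval k
        · intro h
          rcases pos_or_neg k with hk | hk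
          · exact hk
          · have := hnegval k hk; omega
      exact ⟨hinv, hne, hdelta, hsc, halt⟩
    · -- InjOn
      intro π₁ h₁ π₂ h₂ heq
      simp only [Set.mem_setOf_eq] at h₁ h₂
      have heq' : π₁ * negSigned n * π₁ = π₂ * negSigned n * π₂ := heq
      apply Equiv.ext
      intro k
      rcases pos_or_neg k with hk | hk
      · have e1 := comp_pos h₁ hk
        have e2 := comp_pos h₂ hk
        rw [heq'] at e1
        have h3 : negSigned n (π₁ k) = negSigned n (π₂ k) := e1.symm.trans e2
        have h4 := congrArg (negSigned n) h3
        rw [negSigned_negSigned, negSigned_negSigned] at h4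
        exact h4
      · rw [h₁.2.1 k hk, h₂.2.1 k hk]
    · -- SurjOn
      intro α hα
      simp only [Set.mem_setOf_eq] at hα
      obtain ⟨hinv, hne, hdelta, hsc, halt⟩ := hα
      have hainv : α⁻¹ = α := inv_eq_of_mul_eq_one_left hinv
      have haa : ∀ k, α (α k) = k := invol_apply hinv
      -- α anticommutes with δ: α (δ k) = δ (α k)
      have hanti : ∀ k, α (negSigned n k) = negSigned n (α k) := by
        intro k
        have h := Equiv.ext_iff.mp hdelta (negSigned n k)
        simp only [Equiv.Perm.mul_apply] at h
        rw [negSigned_negSigned, hainv] at h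
        exact h.symm
      have hposneg : ∀ k : SignedIdx n, 0 < k.1 → (α k).1 < 0 := fun k hk => (halt k).mp hk
      have hnegpos : ∀ k : SignedIdx n, k.1 < 0 → 0 < (α k).1 := by
        intro k hk
        rcases pos_or_neg (α k) with h | h
        · exact h
        · exfalso
          have : 0 < k.1 := (halt k).mpr h
          omega
      -- the inverse pairing
      have hfinv : Function.Involutive
          (fun k : SignedIdx n => if 0 < k.1 then negSigned n (α k) else k) := by
        intro k
        rcases pos_or_neg k with hk | hk
        · simp only [hk, if_pos]
          have h2 : 0 < (negSigned n (α k)).1 := by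
            rw [negSigned_val]
            have := hposneg k hk
            omega
          simp only [h2, if_pos]
          rw [hanti, negSigned_negSigned, haa]
        · simp [not_lt.mpr (le_of_lt hk)]
      set π : Equiv.Perm (SignedIdx n) := Function.Involutive.toPerm _ hfinv with hπdef
      have hπapp : ∀ k : SignedIdx n,
          π k = if 0 < k.1 then negSigned n (α k) else k := fun k => rfl
      have hπpos : PosPairing n π := by
        refine ⟨?_, ?_, ?_⟩
        · apply Equiv.ext
          intro k
          simp only [Equiv.Perm.mul_apply, Equiv.Perm.one_apply]
          exact hfinv k
        · intro k hk
          rw [hπapp]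
          simp [not_lt.mpr (le_of_lt hk)]
        · intro k hk hfix
          rw [hπapp] at hfix
          simp only [hk, if_pos] at hfix
          have : α k = negSigned n k := by
            have := congrArg (negSigned n) hfix
            rw [negSigned_negSigned] at this
            rw [this]
          exact hsc k ⟨1, by simpa using this⟩
      refine ⟨π, hπpos, ?_⟩
      show π * negSigned n * π = α
      apply Equiv.ext
      intro k
      rcases pos_or_neg k with hk | hk
      · rw [comp_pos hπpos hk, hπapp]
        simp only [hk, if_pos]
        rw [negSigned_negSigned]
      · rw [comp_neg hπpos hk, hπapp]
        have hk' : 0 < (negSigned n k).1 := by rw [negSigned_val]; omega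
        simp only [hk', if_pos]
        rw [hanti, negSigned_negSigned]
  · intro π hπ k hk
    refine ⟨comp_pos hπ hk, ?_⟩
    have hk' : (negSigned n k).1 < 0 := by rw [negSigned_val]; omega
    rw [comp_neg hπ hk', negSigned_negSigned]
end

section
/- The map (π₊, π₋) ↦ π₋δπ₊ is a bijection from the set of ordered pairs of pairings of [n] onto the set of alternating elements of PM(n), i.e., permutations α of ±[n] with δαδ = α⁻¹, no cycle meeting both k and −k, and sgn(α(k)) = −sgn(k) for all k. -/
/-!
For pairings `π₁, π₂`, the permutation `α = π₂ δ π₁` sends a positive `k` to `−π₁ k` and a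
negative `k` to `π₂ (−k)`; so it alternates signs, `π₁` is read off from `α` on the positive
elements, and `π₂` likewise from `α⁻¹ = π₁ δ π₂`. Since `π₁` and `δ π₂ δ` have disjoint
supports they commute, which gives `δ α δ = α⁻¹`. Conversely, for an alternating `α` with
`δ α δ = α⁻¹` the maps `k ↦ −α k` and `k ↦ −α⁻¹ k` on the positive elements are involutions,
without fixed points because `α` never sends `k` to `−k`.
-/

theorem Equiv.Perm.not_sameCycle_of_conj_eq_inv {X : Type*} {α δ : Equiv.Perm X}
    (hδ : δ * δ = 1) (hconj : δ * α * δ = α⁻¹) (hδ_fix : ∀ x, δ x ≠ x)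
    (hα : ∀ x, α x ≠ δ x) (k : X) : ¬ α.SameCycle k (δ k) := by
  rintro ⟨j, hj⟩
  have hsemi : SemiconjBy δ α α⁻¹ := by
    rw [SemiconjBy, ← hconj, mul_assoc, hδ, mul_one]
  have hzpow (m : ℤ) (x : X) : δ ((α ^ m) x) = (α ^ (-m)) (δ x) := by
    rw [← Equiv.Perm.mul_apply, (hsemi.zpow_right m).eq, inv_zpow', Equiv.Perm.mul_apply]
  -- Reflecting the path from `k` to `δ k` in `δ` reverses it, so its midpoint is
  -- either fixed by `δ` or sent by `α` to its own mirror image.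
  obtain ⟨m, rfl | rfl⟩ := j.even_or_odd'
  · refine hδ_fix ((α ^ m) k) ?_
    rw [hzpow, ← hj, ← Equiv.Perm.mul_apply, ← zpow_add, show -m + 2 * m = m by ring]
  · refine hα ((α ^ m) k) ?_
    rw [hzpow, ← hj, ← Equiv.Perm.mul_apply (α ^ (-m)), ← zpow_add,
      show -m + (2 * m + 1) = 1 + m by ring, zpow_one_add, Equiv.Perm.mul_apply]

namespace SignedIdx

variable {n : ℕ}

@[simp]
lemma negSigned_val (k : SignedIdx n) : (negSigned n k).1 = -k.1 := rfl

@[simp]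
lemma negSigned_negSigned (k : SignedIdx n) : negSigned n (negSigned n k) = k :=
  Subtype.ext (neg_neg _)

lemma negSigned_mul_self : negSigned n * negSigned n = 1 :=
  Equiv.ext negSigned_negSigned

lemma negSigned_inv : (negSigned n)⁻¹ = negSigned n :=
  inv_eq_of_mul_eq_one_left negSigned_mul_self

lemma negSigned_ne_self (k : SignedIdx n) : negSigned n k ≠ k := fun h =>
  k.2.1 (by have := congrArg Subtype.val h; simp only [negSigned_val] at this; omega)

lemma neg_iff_not_pos (k : SignedIdx n) : k.1 < 0 ↔ ¬ 0 < k.1 :=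
  ⟨fun h => h.not_gt, fun h => lt_of_le_of_ne (not_lt.mp h) k.2.1⟩

lemma pos_or_neg (k : SignedIdx n) : 0 < k.1 ∨ k.1 < 0 := by
  rw [neg_iff_not_pos]
  exact em _

end SignedIdx

open SignedIdx

namespace PosPairing

variable {n : ℕ} {π π₁ π₂ : Equiv.Perm (SignedIdx n)}

lemma inv_eq (h : PosPairing n π) : π⁻¹ = π :=
  inv_eq_of_mul_eq_one_left h.1

lemma pos_apply (h : PosPairing n π) {k : SignedIdx n} (hk : 0 < k.1) : 0 < (π k).1 := by
  by_contra hneg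
  have hfix : π (π k) = π k := h.2.1 _ ((neg_iff_not_pos _).mpr hneg)
  rw [← Equiv.Perm.mul_apply, h.1, Equiv.Perm.one_apply] at hfix
  exact h.2.2 k hk hfix.symm

lemma mul_negSigned_mul_apply_of_pos (h₁ : PosPairing n π₁) (h₂ : PosPairing n π₂)
    {k : SignedIdx n} (hk : 0 < k.1) : (π₂ * negSigned n * π₁) k = negSigned n (π₁ k) :=
  h₂.2.1 _ (by simpa using h₁.pos_apply hk)

lemma mul_negSigned_mul_apply_of_neg (h₁ : PosPairing n π₁) {k : SignedIdx n}
    (hk : k.1 < 0) : (π₂ * negSigned n * π₁) k = π₂ (negSigned n k) := by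
  simp [h₁.2.1 k hk]

lemma mul_negSigned_mul_inv (h₁ : PosPairing n π₁) (h₂ : PosPairing n π₂) :
    (π₂ * negSigned n * π₁)⁻¹ = π₁ * negSigned n * π₂ := by
  rw [mul_inv_rev, mul_inv_rev, h₁.inv_eq, h₂.inv_eq, negSigned_inv, mul_assoc]

/-- `π₁` moves only positive and `δ π₂ δ` only negative elements. -/
lemma commute_negSigned_conj (h₁ : PosPairing n π₁) (h₂ : PosPairing n π₂) :
    Commute π₁ (negSigned n * π₂ * negSigned n) := by
  refine Equiv.Perm.Disjoint.commute fun k => (pos_or_neg k).symm.imp (h₁.2.1 k) fun hk => ?_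
  simp [h₂.2.1 (negSigned n k) (by simpa using hk)]

end PosPairing

open PosPairing

def altPM (n : ℕ) : Set (Equiv.Perm (SignedIdx n)) :=
  {α | negSigned n * α * negSigned n = α⁻¹ ∧
    (∀ k, ¬ α.SameCycle k (negSigned n k)) ∧
    (∀ k : SignedIdx n, 0 < k.1 ↔ ((α k).1 < 0))}

lemma mul_negSigned_mul_mem_altPM {n : ℕ} {π₁ π₂ : Equiv.Perm (SignedIdx n)}
    (h₁ : PosPairing n π₁) (h₂ : PosPairing n π₂) : π₂ * negSigned n * π₁ ∈ altPM n := by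
  have hconj : negSigned n * (π₂ * negSigned n * π₁) * negSigned n
      = (π₂ * negSigned n * π₁)⁻¹ :=
    calc negSigned n * (π₂ * negSigned n * π₁) * negSigned n
        = negSigned n * π₂ * negSigned n * π₁ * negSigned n := by simp only [mul_assoc]
      _ = π₁ * (negSigned n * π₂ * negSigned n) * negSigned n := by
        rw [← (commute_negSigned_conj h₁ h₂).eq]
      _ = π₁ * negSigned n * π₂ := by simp only [mul_assoc, negSigned_mul_self, mul_one]
      _ = (π₂ * negSigned n * π₁)⁻¹ := (mul_negSigned_mul_inv h₁ h₂).symm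
  refine ⟨hconj, ?_, fun k => ?_⟩
  · refine Equiv.Perm.not_sameCycle_of_conj_eq_inv negSigned_mul_self hconj
      negSigned_ne_self fun k hk => ?_
    rcases pos_or_neg k with hpos | hneg
    · rw [mul_negSigned_mul_apply_of_pos h₁ h₂ hpos] at hk
      exact h₁.2.2 k hpos ((negSigned n).injective hk)
    · rw [mul_negSigned_mul_apply_of_neg h₁ hneg] at hk
      exact h₂.2.2 _ (by simpa using hneg) hk
  · rcases pos_or_neg k with hpos | hneg
    · rw [mul_negSigned_mul_apply_of_pos h₁ h₂ hpos]
      simpa [hpos] using h₁.pos_apply hpos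
    · rw [mul_negSigned_mul_apply_of_neg h₁ hneg]
      simpa [(neg_iff_not_pos _).mp hneg] using
        (h₂.pos_apply (k := negSigned n k) (by simpa using hneg)).le

/-- Reads off the first pairing of `α = π₂ δ π₁`; that of `α⁻¹ = π₁ δ π₂` is the second. -/
def firstPairing {n : ℕ} (α : Equiv.Perm (SignedIdx n)) (k : SignedIdx n) : SignedIdx n :=
  if 0 < k.1 then negSigned n (α k) else k

lemma PosPairing.coe_eq_firstPairing {n : ℕ} {π₁ π₂ : Equiv.Perm (SignedIdx n)}
    (h₁ : PosPairing n π₁) (h₂ : PosPairing n π₂) :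
    ⇑π₁ = firstPairing (π₂ * negSigned n * π₁) := by
  funext k
  rcases pos_or_neg k with hpos | hneg
  · simp [firstPairing, hpos, mul_negSigned_mul_apply_of_pos h₁ h₂ hpos]
  · simp [firstPairing, (neg_iff_not_pos _).mp hneg, h₁.2.1 k hneg]

namespace altPM

variable {n : ℕ} {α : Equiv.Perm (SignedIdx n)}

lemma negSigned_apply_negSigned (hα : α ∈ altPM n) (k : SignedIdx n) :
    negSigned n (α (negSigned n k)) = α⁻¹ k := by
  rw [← hα.1]
  rfl

lemma apply_ne_negSigned (hα : α ∈ altPM n) (k : SignedIdx n) : α k ≠ negSigned n k :=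
  fun h => hα.2.1 k ⟨1, by simpa using h⟩

lemma inv_mem (hα : α ∈ altPM n) : α⁻¹ ∈ altPM n := by
  refine ⟨?_, fun k => by simpa using hα.2.1 k, fun k => ?_⟩
  · rw [inv_inv, ← hα.1]
    simp only [← mul_assoc, negSigned_mul_self, one_mul]
    rw [mul_assoc, negSigned_mul_self, mul_one]
  · have := hα.2.2 (α⁻¹ k)
    rw [show α (α⁻¹ k) = k from α.apply_symm_apply k] at this
    rw [neg_iff_not_pos (α⁻¹ k), this, neg_iff_not_pos k, not_not]

lemma firstPairing_involutive (hα : α ∈ altPM n) : Function.Involutive (firstPairing α) := by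
  intro k
  by_cases hk : 0 < k.1
  · have hαk : 0 < (negSigned n (α k)).1 := by simpa using (hα.2.2 k).mp hk
    simp only [firstPairing, if_pos hk, if_pos hαk, negSigned_apply_negSigned hα]
    exact α.symm_apply_apply k
  · simp [firstPairing, hk]

lemma posPairing_firstPairing (hα : α ∈ altPM n) :
    PosPairing n (Function.Involutive.toPerm _ (firstPairing_involutive hα)) := by
  refine ⟨Equiv.ext (firstPairing_involutive hα), fun k hk => ?_, fun k hk hfix => ?_⟩
  · simp [firstPairing, (neg_iff_not_pos _).mp hk]
  · simp only [Function.Involutive.coe_toPerm, firstPairing, hk, if_true] at hfix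
    exact apply_ne_negSigned hα k ((negSigned n).injective (by rw [hfix, negSigned_negSigned]))

lemma eq_mul_negSigned_mul (hα : α ∈ altPM n) :
    α = Function.Involutive.toPerm _ (firstPairing_involutive (inv_mem hα)) * negSigned n *
      Function.Involutive.toPerm _ (firstPairing_involutive hα) := by
  ext1 k
  rcases pos_or_neg k with hpos | hneg
  · have : ¬ 0 < (α k).1 := (neg_iff_not_pos _).mp ((hα.2.2 k).mp hpos)
    simp [firstPairing, hpos, this]
  · have hδk : 0 < (negSigned n k).1 := by simpa using hneg
    simp only [Equiv.Perm.mul_apply, Function.Involutive.coe_toPerm, firstPairing,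
      if_neg ((neg_iff_not_pos _).mp hneg), if_pos hδk, negSigned_apply_negSigned (inv_mem hα),
      inv_inv]

end altPM

theorem stmt16 (n : ℕ) :
    Set.BijOn
      (fun p : Equiv.Perm (SignedIdx n) × Equiv.Perm (SignedIdx n) =>
        p.2 * negSigned n * p.1)
      {p | PosPairing n p.1 ∧ PosPairing n p.2}
      {α : Equiv.Perm (SignedIdx n) |
        negSigned n * α * negSigned n = α⁻¹ ∧
        (∀ k, ¬ α.SameCycle k (negSigned n k)) ∧
        (∀ k : SignedIdx n, 0 < k.1 ↔ ((α k).1 < 0))} := by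
  refine ⟨fun p hp => mul_negSigned_mul_mem_altPM hp.1 hp.2, ?_, fun α hα => ?_⟩
  · rintro ⟨π₁, π₂⟩ ⟨h₁, h₂⟩ ⟨σ₁, σ₂⟩ ⟨g₁, g₂⟩ heq
    have hfst : π₁ = σ₁ := DFunLike.coe_injective <| by
      rw [coe_eq_firstPairing h₁ h₂, coe_eq_firstPairing g₁ g₂]
      exact congrArg firstPairing heq
    have hsnd : π₂ = σ₂ := DFunLike.coe_injective <| by
      rw [coe_eq_firstPairing h₂ h₁, coe_eq_firstPairing g₂ g₁, ← mul_negSigned_mul_inv h₁ h₂,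
        ← mul_negSigned_mul_inv g₁ g₂]
      exact congrArg (fun α => firstPairing α⁻¹) heq
    exact Prod.ext hfst hsnd
  · exact ⟨(_, _), ⟨altPM.posPairing_firstPairing hα,
      altPM.posPairing_firstPairing (altPM.inv_mem hα)⟩, (altPM.eq_mul_negSigned_mul hα).symm⟩
end
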